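/- For n ≥ 1 and 0 < s < 1, the kernel q^{(s)}(x,y,t) = (4πt)^{−(n/2+1−s)} e^{−(|x|²+y²)/(4t)} satisfies the extension PDE: for every x ∈ ℝ^n, t > 0, y > 0, ∂²_y q^{(s)} + ((1−2s)/y) ∂_y q^{(s)} + Δ_x q^{(s)} − ∂_t q^{(s)} = 0. -/

import Mathlib

open Real MeasureTheory Set

/-- The coordinate Laplacian on `ℝ^n`. -/
noncomputable def lapl (n : ℕ) (f : EuclideanSpace ℝ (Fin n) → ℝ)
    (x : EuclideanSpace ℝ (Fin n)) : ℝ :=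
  ∑ i : Fin n,
    fderiv ℝ (fun z => fderiv ℝ f z (EuclideanSpace.single i (1:ℝ))) x
      (EuclideanSpace.single i (1:ℝ))

/-- The extension heat kernel `q^{(s)}(x,y,t)`. -/
noncomputable def qs (n : ℕ) (s : ℝ) (x : EuclideanSpace ℝ (Fin n)) (y t : ℝ) : ℝ :=
  (4 * π * t) ^ (-((n:ℝ)/2 + 1 - s)) * Real.exp (-(‖x‖^2 + y^2)/(4*t))

lemma norm_sq_sum (n : ℕ) (z : EuclideanSpace ℝ (Fin n)) : ‖z‖^2 = ∑ i, (z i)^2 := by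
  rw [EuclideanSpace.norm_eq, Real.sq_sqrt (by positivity)]
  simp [Real.norm_eq_abs, sq_abs]

lemma sq_fderiv (n : ℕ) (i : Fin n) (z : EuclideanSpace ℝ (Fin n)) :
    HasFDerivAt (fun w : EuclideanSpace ℝ (Fin n) => (w i)^2)
      (((2:ℝ)*z i) • (EuclideanSpace.proj i : EuclideanSpace ℝ (Fin n) →L[ℝ] ℝ)) z := by
  have h : HasFDerivAt (fun w : EuclideanSpace ℝ (Fin n) => w i)
      (EuclideanSpace.proj i : EuclideanSpace ℝ (Fin n) →L[ℝ] ℝ) z :=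
    (EuclideanSpace.proj (i : Fin n) : EuclideanSpace ℝ (Fin n) →L[ℝ] ℝ).hasFDerivAt
  simpa [pow_two, two_mul, add_smul] using h.fun_mul h

lemma qs_fderiv (n : ℕ) (s : ℝ) (y t : ℝ) (z : EuclideanSpace ℝ (Fin n)) :
    HasFDerivAt (fun x' : EuclideanSpace ℝ (Fin n) => qs n s x' y t)
      ((qs n s z y t * (-(1/(4*t)))) •
        (∑ j, ((2:ℝ)*z j) • (EuclideanSpace.proj j : EuclideanSpace ℝ (Fin n) →L[ℝ] ℝ))) z := by
  set L : EuclideanSpace ℝ (Fin n) →L[ℝ] ℝ :=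
    ∑ j, ((2:ℝ)*z j) • (EuclideanSpace.proj j : EuclideanSpace ℝ (Fin n) →L[ℝ] ℝ) with hL
  have hS : HasFDerivAt (fun x' : EuclideanSpace ℝ (Fin n) => ∑ j, (x' j)^2) L z := by
    rw [hL]; exact HasFDerivAt.fun_sum fun j _ => sq_fderiv n j z
  have h2 : HasFDerivAt (fun x' : EuclideanSpace ℝ (Fin n) =>
      (-(1/(4*t))) * ((∑ j, (x' j)^2) + y^2)) ((-(1/(4*t))) • L) z :=
    (hS.add_const (y^2)).const_mul _
  have h4 := (h2.exp).const_mul ((4 * π * t) ^ (-((n:ℝ)/2 + 1 - s)))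
  have hfun : (fun x' : EuclideanSpace ℝ (Fin n) => qs n s x' y t) =
      fun x' => (4 * π * t) ^ (-((n:ℝ)/2 + 1 - s)) *
        Real.exp ((-(1/(4*t))) * ((∑ j, (x' j)^2) + y^2)) := by
    funext w
    have h5 : -(‖w‖^2 + y^2)/(4*t) = (-(1/(4*t))) * ((∑ j, (w j)^2) + y^2) := by
      rw [← norm_sq_sum]; ring
    simp only [qs, h5]
  rw [hfun]
  refine h4.congr_fderiv ?_
  symm
  rw [smul_smul, smul_smul]
  congr 1
  have h5 : -(‖z‖^2 + y^2)/(4*t) = (-(1/(4*t))) * ((∑ j, (z j)^2) + y^2) := by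
    rw [← norm_sq_sum]; ring
  simp only [qs, h5]
  try ring

lemma sum_eval (n : ℕ) (i : Fin n) (z : EuclideanSpace ℝ (Fin n)) :
    (∑ j, ((2:ℝ)*z j) • (EuclideanSpace.proj j : EuclideanSpace ℝ (Fin n) →L[ℝ] ℝ))
      (EuclideanSpace.single i (1:ℝ)) = 2 * z i := by
  rw [ContinuousLinearMap.sum_apply]
  have h : ∀ j : Fin n, (((2:ℝ)*z j) • (EuclideanSpace.proj j : EuclideanSpace ℝ (Fin n) →L[ℝ] ℝ))
      (EuclideanSpace.single i (1:ℝ)) = if j = i then 2 * z j else 0 := by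
    intro j
    by_cases hji : j = i
    · subst hji; simp [EuclideanSpace.single_apply]
    · simp [EuclideanSpace.single_apply, hji, Ne.symm hji]
  rw [Finset.sum_congr rfl fun j _ => h j]
  simp

theorem stmt_14 (n : ℕ) (hn : 1 ≤ n) (s : ℝ) (hs0 : 0 < s) (hs1 : s < 1)
    (x : EuclideanSpace ℝ (Fin n)) (y t : ℝ) (hy : 0 < y) (ht : 0 < t) :
    deriv (deriv (fun y' => qs n s x y' t)) y
      + ((1 - 2*s)/y) * deriv (fun y' => qs n s x y' t) y
      + lapl n (fun x' => qs n s x' y t) x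
      - deriv (fun t' => qs n s x y t') t = 0 := by
  have ht' : (t:ℝ) ≠ 0 := ht.ne'
  have h4πt : (0:ℝ) < 4 * π * t := by positivity
  -- y derivatives
  have hdy : ∀ u : ℝ, HasDerivAt (fun y' => qs n s x y' t)
      (qs n s x u t * (-(u/(2*t)))) u := by
    intro u
    have h1 : HasDerivAt (fun y' : ℝ => -(‖x‖^2 + y'^2)/(4*t)) (-(2*u)/(4*t)) u := by
      have := (((hasDerivAt_pow 2 u).const_add (‖x‖^2)).neg).div_const (4*t)
      simpa using this
    have h2 := (h1.exp).const_mul ((4 * π * t) ^ (-((n:ℝ)/2 + 1 - s)))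
    have h3 : (4 * π * t) ^ (-((n:ℝ)/2 + 1 - s)) *
        (Real.exp (-(‖x‖^2 + u^2)/(4*t)) * (-(2*u)/(4*t)))
        = qs n s x u t * (-(u/(2*t))) := by
      simp only [qs]; field_simp; ring
    rw [h3] at h2
    exact h2
  have hD : deriv (fun y' => qs n s x y' t) = fun u => qs n s x u t * (-(u/(2*t))) := by
    funext u; exact (hdy u).deriv
  have hdy2 : HasDerivAt (fun u => qs n s x u t * (-(u/(2*t))))
      ((qs n s x y t * (-(y/(2*t)))) * (-(y/(2*t))) + qs n s x y t * (-(1/(2*t)))) y := by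
    have h2 : HasDerivAt (fun u : ℝ => -(u/(2*t))) (-(1/(2*t))) y := by
      simpa using ((hasDerivAt_id y).div_const (2*t)).fun_neg
    exact (hdy y).mul h2
  -- t derivative
  have hdt : HasDerivAt (fun t' => qs n s x y t')
      ((-((n:ℝ)/2 + 1 - s) * (4*π*t)^(-((n:ℝ)/2 + 1 - s)-1) * (4*π)) *
          Real.exp (-(‖x‖^2+y^2)/(4*t))
        + (4*π*t)^(-((n:ℝ)/2 + 1 - s)) *
          (Real.exp (-(‖x‖^2+y^2)/(4*t)) * ((‖x‖^2+y^2)/4 * (t^2)⁻¹))) t := by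
    have h0 : HasDerivAt (fun t' : ℝ => 4*π*t') (4*π) t := by
      simpa using (hasDerivAt_id t).const_mul (4*π)
    have hr := Real.hasDerivAt_rpow_const (x := 4*π*t) (p := -((n:ℝ)/2 + 1 - s))
      (Or.inl h4πt.ne')
    have hA := hr.comp t h0
    have hinv : HasDerivAt (fun t' : ℝ => -(‖x‖^2+y^2)/(4*t'))
        ((‖x‖^2+y^2)/4 * (t^2)⁻¹) t := by
      have h := (hasDerivAt_inv ht').const_mul (-(‖x‖^2+y^2)/4)
      have heq : (fun t' : ℝ => -(‖x‖^2+y^2)/4 * t'⁻¹)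
          = fun t' : ℝ => -(‖x‖^2+y^2)/(4*t') := by
        funext u; ring
      rw [heq] at h
      refine h.congr_deriv ?_
      ring
    have hB := hinv.exp
    have hAB := hA.fun_mul hB
    simp only [Function.comp] at hAB
    exact hAB
    try ring
  -- Laplacian
  have hD1 : ∀ i : Fin n,
      (fun z => fderiv ℝ (fun x' => qs n s x' y t) z (EuclideanSpace.single i (1:ℝ)))
        = fun z => qs n s z y t * (-(z i/(2*t))) := by
    intro i; funext z
    rw [(qs_fderiv n s y t z).fderiv, ContinuousLinearMap.smul_apply, sum_eval]
    simp only [smul_eq_mul]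
    field_simp
    ring
  have hD2 : ∀ i : Fin n,
      fderiv ℝ (fun z => fderiv ℝ (fun x' => qs n s x' y t) z (EuclideanSpace.single i (1:ℝ)))
        x (EuclideanSpace.single i (1:ℝ))
      = qs n s x y t * (-(1/(2*t))) + (x i/(2*t))^2 * qs n s x y t := by
    intro i
    rw [hD1 i]
    have hlin : HasFDerivAt (fun z : EuclideanSpace ℝ (Fin n) => -(z i/(2*t)))
        ((-(1/(2*t))) • (EuclideanSpace.proj i : EuclideanSpace ℝ (Fin n) →L[ℝ] ℝ)) x := by
      have h : HasFDerivAt (fun w : EuclideanSpace ℝ (Fin n) => w i)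
          (EuclideanSpace.proj i : EuclideanSpace ℝ (Fin n) →L[ℝ] ℝ) x :=
        (EuclideanSpace.proj (i : Fin n) : EuclideanSpace ℝ (Fin n) →L[ℝ] ℝ).hasFDerivAt
      have h2 := h.const_mul (-(1/(2*t)))
      have heq : (fun z : EuclideanSpace ℝ (Fin n) => (-(1/(2*t))) * z i)
          = fun z : EuclideanSpace ℝ (Fin n) => -(z i/(2*t)) := by
        funext w; ring
      rw [heq] at h2
      exact h2
    have hmul := (qs_fderiv n s y t x).fun_mul hlin
    rw [hmul.fderiv]
    have hproj : (EuclideanSpace.proj (i : Fin n) : EuclideanSpace ℝ (Fin n) →L[ℝ] ℝ)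
        (EuclideanSpace.single i (1:ℝ)) = 1 := by
      simp [EuclideanSpace.single_apply]
    simp only [ContinuousLinearMap.add_apply, ContinuousLinearMap.smul_apply, smul_eq_mul]
    rw [sum_eval, hproj]
    field_simp
    ring
  have hlapl : lapl n (fun x' => qs n s x' y t) x
      = qs n s x y t * (-((n:ℝ)/(2*t))) + (‖x‖^2/(4*t^2)) * qs n s x y t := by
    rw [lapl]
    rw [Finset.sum_congr rfl fun i _ => hD2 i]
    rw [Finset.sum_add_distrib, Finset.sum_const, Finset.card_univ, Fintype.card_fin,
      ← Finset.sum_mul, nsmul_eq_mul]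
    have hsum : ∑ i : Fin n, (x i/(2*t))^2 = (∑ i : Fin n, (x i)^2)/(4*t^2) := by
      rw [Finset.sum_div]
      refine Finset.sum_congr rfl fun i _ => ?_
      rw [div_pow]
      congr 1
      ring
    rw [hsum, norm_sq_sum]
    field_simp
  -- assemble
  rw [hD, hdy2.deriv, hdt.deriv, hlapl]
  have hexp : (4*π*t)^(-((n:ℝ)/2 + 1 - s)-1) * (4*π*t) = (4*π*t)^(-((n:ℝ)/2 + 1 - s)) := by
    rw [← Real.rpow_add_one h4πt.ne']
    ring_nf
  simp only [qs]
  set P := (4*π*t)^(-((n:ℝ)/2 + 1 - s)) with hPdef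
  set P' := (4*π*t)^(-((n:ℝ)/2 + 1 - s)-1) with hP'def
  set E := Real.exp (-(‖x‖^2 + y^2)/(4*t)) with hEdef
  have hP2 : P' = P / (4*π*t) := by
    rw [eq_div_iff h4πt.ne']; exact hexp
  rw [hP2]
  have hπ : π ≠ 0 := Real.pi_ne_zero
  field_simp
  ring
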